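/- Let g_max > 0 and let f_k, f_τ : [0, g_max] → ℝ both be strictly convex on [0, g_max], strictly increasing, continuous, with f_k(0) = f_τ(0) = 0, f_τ(g) ≤ f_k(g) for all g ∈ [0, g_max], f_τ(g_max) < f_k(g_max), and suppose f_k has finite left derivative at g_max. Let c_1, c_2 > 0. Then there exists a positive integer N_2, depending only on f_k, f_τ, g_max, c_1 and c_2, such that for every integer N ≥ N_2 and every nonnegative random variable Z satisfying E[1/(1+Z)] ≥ c_1/N and E[1/(1+Z)²] ≤ c_2/N², the following holds for all g ∈ [0, g_max]: E[log(1 + f_k(g_max)/(1+Z))] − E[log(1 + f_τ(g_max)/(1+Z))] ≥ E[log(1 + f_k(g)/(1+Z))] − (g/g_max) · E[log(1 + f_τ(g_max)/(1+Z))]. -/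

import Mathlib

/-!
Write `Y = (1 + Z)⁻¹ ∈ (0, 1]`, `A = f_k(g_max)`, `B = f_τ(g_max)`, `b = f_k(g)` and
`t = g / g_max`. Convexity and `f_k(0) = 0` give `b ≤ t A`. Since `log(1 + x) ≤ x`, the
rate at power `B` is at most `B E[Y]`, while `log u ≥ 1 - u⁻¹` bounds the rate gain from `b`
to `A` below by `(A - b)(E[Y] - A E[Y²])`. Both sides are therefore controlled by the first
two moments of `Y`, and the inequality reduces to `A² E[Y²] ≤ (A - B) E[Y]`. The moment
bounds make the left side `O(1/N²)` and the right side `Ω(1/N)`, so it holds for large `N`.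
-/

open MeasureTheory Real Set

lemma ConvexOn.le_div_mul_of_map_zero {f : ℝ → ℝ} {x g : ℝ} (hf : ConvexOn ℝ (Icc 0 x) f)
    (hf0 : f 0 = 0) (hx : 0 < x) (hg : g ∈ Icc 0 x) : f g ≤ g / x * f x := by
  have ht : 0 ≤ g / x := div_nonneg hg.1 hx.le
  have ht' : 0 ≤ 1 - g / x := sub_nonneg.2 ((div_le_one hx).2 hg.2)
  have h := hf.2 (left_mem_Icc.2 hx.le) (right_mem_Icc.2 hx.le) ht' ht (sub_add_cancel 1 _)
  have hg_eq : (1 - g / x) • (0 : ℝ) + (g / x) • x = g := by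
    simp only [smul_eq_mul, mul_zero, zero_add, div_mul_cancel₀ g hx.ne']
  rwa [hg_eq, hf0, smul_zero, zero_add, smul_eq_mul] at h

lemma Real.log_one_add_le_self {x : ℝ} (hx : -1 < x) : log (1 + x) ≤ x := by
  linarith [log_le_sub_one_of_pos (x := 1 + x) (by linarith)]

lemma Real.sub_mul_sub_le_log_one_add_mul_sub {A b y : ℝ} (hb : 0 ≤ b) (hbA : b ≤ A)
    (hy : 0 ≤ y) :
    (A - b) * y * (1 - A * y) ≤ log (1 + A * y) - log (1 + b * y) := by
  have hby : 0 < 1 + b * y := by positivity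
  have hAy : 0 < 1 + A * y := by nlinarith
  have hgap : 0 ≤ (A - b) * y := mul_nonneg (sub_nonneg.2 hbA) hy
  calc (A - b) * y * (1 - A * y)
      ≤ (A - b) * y / (1 + A * y) := by
        rw [le_div_iff₀ hAy]
        nlinarith [mul_nonneg hgap (sq_nonneg (A * y))]
    _ = 1 - ((1 + A * y) / (1 + b * y))⁻¹ := by field_simp; ring
    _ ≤ log ((1 + A * y) / (1 + b * y)) := one_sub_inv_le_log_of_pos (div_pos hAy hby)
    _ = log (1 + A * y) - log (1 + b * y) := log_div hAy.ne' hby.ne'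

lemma moment_condition_of_ge {A B c₁ c₂ m₁ m₂ N : ℝ} (hc₁ : 0 < c₁) (hAB : B < A)
    (hN₀ : 0 < N) (hN : A ^ 2 * c₂ / (c₁ * (A - B)) ≤ N) (hm₁ : c₁ / N ≤ m₁)
    (hm₂ : m₂ ≤ c₂ / N ^ 2) :
    A ^ 2 * m₂ ≤ (A - B) * m₁ := by
  have hN' : A ^ 2 * c₂ ≤ N * (c₁ * (A - B)) :=
    (div_le_iff₀ (mul_pos hc₁ (sub_pos.2 hAB))).1 hN
  calc A ^ 2 * m₂ ≤ A ^ 2 * (c₂ / N ^ 2) := by gcongr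
    _ = A ^ 2 * c₂ / N / N := by ring
    _ ≤ c₁ * (A - B) / N := by
        gcongr
        exact (div_le_iff₀ hN₀).2 (by linarith)
    _ = (A - B) * (c₁ / N) := by ring
    _ ≤ (A - B) * m₁ := by gcongr

section Moments

variable {Ω : Type*} [MeasurableSpace Ω] {P : Measure Ω} [IsProbabilityMeasure P]
  {Y : Ω → ℝ}

lemma integrable_log_one_add_mul (hYm : AEMeasurable Y P) (hY : ∀ᵐ ω ∂P, Y ω ∈ Icc 0 1)
    {a : ℝ} (ha : 0 ≤ a) : Integrable (fun ω => log (1 + a * Y ω)) P := by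
  refine Integrable.of_mem_Icc 0 a
    (measurable_log.comp_aemeasurable ((hYm.const_mul a).const_add 1)) ?_
  filter_upwards [hY] with ω hω
  have hx : 0 ≤ a * Y ω := mul_nonneg ha hω.1
  exact ⟨log_nonneg (by linarith),
    (log_one_add_le_self (by linarith)).trans (mul_le_of_le_one_right ha hω.2)⟩

lemma integral_log_one_add_mul_le (hYm : AEMeasurable Y P) (hY : ∀ᵐ ω ∂P, Y ω ∈ Icc 0 1)
    {a : ℝ} (ha : 0 ≤ a) : ∫ ω, log (1 + a * Y ω) ∂P ≤ a * ∫ ω, Y ω ∂P := by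
  rw [← integral_const_mul]
  refine integral_mono_ae (integrable_log_one_add_mul hYm hY ha)
    ((Integrable.of_mem_Icc 0 1 hYm hY).const_mul a) ?_
  filter_upwards [hY] with ω hω
  exact log_one_add_le_self (by nlinarith [hω.1])

lemma integral_log_one_add_mul_sub_ge (hYm : AEMeasurable Y P) (hY : ∀ᵐ ω ∂P, Y ω ∈ Icc 0 1)
    {A b : ℝ} (hb : 0 ≤ b) (hbA : b ≤ A) :
    (A - b) * ((∫ ω, Y ω ∂P) - A * ∫ ω, Y ω ^ 2 ∂P)
      ≤ (∫ ω, log (1 + A * Y ω) ∂P) - ∫ ω, log (1 + b * Y ω) ∂P := by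
  have hYint : Integrable Y P := .of_mem_Icc 0 1 hYm hY
  have hY2int : Integrable (fun ω => Y ω ^ 2) P := .of_mem_Icc 0 1 (hYm.pow_const 2)
    (hY.mono fun ω hω => ⟨sq_nonneg _, pow_le_one₀ hω.1 hω.2⟩)
  have hlogA := integrable_log_one_add_mul hYm hY (hb.trans hbA)
  have hlogb := integrable_log_one_add_mul hYm hY hb
  have hmono : ∫ ω, ((A - b) * Y ω - (A - b) * A * Y ω ^ 2) ∂P
      ≤ ∫ ω, (log (1 + A * Y ω) - log (1 + b * Y ω)) ∂P := by
    refine integral_mono_ae ((hYint.const_mul _).sub (hY2int.const_mul _))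
      (hlogA.sub hlogb) ?_
    filter_upwards [hY] with ω hω
    have := sub_mul_sub_le_log_one_add_mul_sub hb hbA hω.1
    linarith
  rw [integral_sub (hYint.const_mul _) (hY2int.const_mul _), integral_const_mul,
    integral_const_mul, integral_sub hlogA hlogb] at hmono
  linarith

lemma integral_log_one_add_mul_sub_le_of_moment (hYm : AEMeasurable Y P)
    (hY : ∀ᵐ ω ∂P, Y ω ∈ Icc 0 1) {A B b t : ℝ} (hA : 0 < A) (hB : 0 ≤ B) (hb : 0 ≤ b)
    (ht : t ≤ 1) (hbt : b ≤ t * A)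
    (hmom : A ^ 2 * ∫ ω, Y ω ^ 2 ∂P ≤ (A - B) * ∫ ω, Y ω ∂P) :
    (∫ ω, log (1 + b * Y ω) ∂P) - t * ∫ ω, log (1 + B * Y ω) ∂P
      ≤ (∫ ω, log (1 + A * Y ω) ∂P) - ∫ ω, log (1 + B * Y ω) ∂P := by
  set m₁ := ∫ ω, Y ω ∂P
  set m₂ := ∫ ω, Y ω ^ 2 ∂P
  have hm₁ : 0 ≤ m₁ := integral_nonneg_of_ae (hY.mono fun ω hω => hω.1)
  have hbA : b ≤ A := hbt.trans (by nlinarith)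
  have hgain := integral_log_one_add_mul_sub_ge hYm hY hb hbA
  have hcost := integral_log_one_add_mul_le hYm hY hB
  have hnet : B * m₁ ≤ A * (m₁ - A * m₂) := by linarith
  have hnet_nonneg : 0 ≤ m₁ - A * m₂ := by
    by_contra! h
    nlinarith [mul_nonneg hB hm₁]
  suffices (1 - t) * ∫ ω, log (1 + B * Y ω) ∂P
      ≤ (∫ ω, log (1 + A * Y ω) ∂P) - ∫ ω, log (1 + b * Y ω) ∂P by linarith
  calc (1 - t) * ∫ ω, log (1 + B * Y ω) ∂P
      ≤ (1 - t) * (B * m₁) := by gcongr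
    _ ≤ (1 - t) * A * (m₁ - A * m₂) := by
        rw [mul_assoc]; exact mul_le_mul_of_nonneg_left hnet (by linarith)
    _ ≤ (A - b) * (m₁ - A * m₂) := by gcongr; linarith
    _ ≤ _ := hgain

end Moments

theorem dual_feasibility_above_threshold_general
    (gmax : ℝ) (hgmax : 0 < gmax) (fk fτ : ℝ → ℝ)
    (hkconv : StrictConvexOn ℝ (Set.Icc 0 gmax) fk)
    (hkmono : StrictMonoOn fk (Set.Icc 0 gmax))
    (hτmono : StrictMonoOn fτ (Set.Icc 0 gmax))
    (hk0 : fk 0 = 0) (hτ0 : fτ 0 = 0)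
    (hlt : fτ gmax < fk gmax)
    (c₁ c₂ : ℝ) (hc₁ : 0 < c₁) :
    ∃ N₂ : ℕ, 0 < N₂ ∧
      ∀ N : ℕ, N₂ ≤ N →
      ∀ (Ω : Type) [MeasurableSpace Ω] (P : Measure Ω) [IsProbabilityMeasure P]
        (Z : Ω → ℝ), Measurable Z → (∀ᵐ ω ∂P, 0 ≤ Z ω) →
        c₁ / (N : ℝ) ≤ ∫ ω, (1 + Z ω)⁻¹ ∂P →
        ∫ ω, ((1 + Z ω) ^ 2)⁻¹ ∂P ≤ c₂ / (N : ℝ) ^ 2 →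
        ∀ g ∈ Set.Icc 0 gmax,
          (∫ ω, Real.log (1 + fk g / (1 + Z ω)) ∂P)
              - (g / gmax) * ∫ ω, Real.log (1 + fτ gmax / (1 + Z ω)) ∂P
            ≤ (∫ ω, Real.log (1 + fk gmax / (1 + Z ω)) ∂P)
              - ∫ ω, Real.log (1 + fτ gmax / (1 + Z ω)) ∂P := by
  have h0 : (0 : ℝ) ∈ Icc 0 gmax := left_mem_Icc.2 hgmax.le
  have hgmax_mem : gmax ∈ Icc 0 gmax := right_mem_Icc.2 hgmax.le
  have hA : 0 < fk gmax := hk0 ▸ hkmono h0 hgmax_mem hgmax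
  have hB : 0 < fτ gmax := hτ0 ▸ hτmono h0 hgmax_mem hgmax
  refine ⟨⌈fk gmax ^ 2 * c₂ / (c₁ * (fk gmax - fτ gmax))⌉₊ + 1, Nat.succ_pos _, ?_⟩
  intro N hN Ω _ P _ Z hZm hZ hm₁ hm₂ g hg
  have hN' : fk gmax ^ 2 * c₂ / (c₁ * (fk gmax - fτ gmax)) ≤ N :=
    (Nat.le_ceil _).trans (by exact_mod_cast (Nat.le_succ _).trans hN)
  have hY : ∀ᵐ ω ∂P, (1 + Z ω)⁻¹ ∈ Icc 0 1 := by
    filter_upwards [hZ] with ω hω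
    exact ⟨inv_nonneg.2 (by linarith), inv_le_one_of_one_le₀ (by linarith)⟩
  have hb : 0 ≤ fk g := hk0 ▸ hkmono.monotoneOn h0 hg hg.1
  have hN₀ : (0 : ℝ) < N := by exact_mod_cast (Nat.succ_pos _).trans_le hN
  simp only [div_eq_mul_inv (fk g), div_eq_mul_inv (fk gmax), div_eq_mul_inv (fτ gmax)]
  simp only [← inv_pow] at hm₂
  exact integral_log_one_add_mul_sub_le_of_moment (measurable_const.add hZm).inv.aemeasurable
    hY hA hB.le hb ((div_le_one hgmax).2 hg.2)
    (hkconv.convexOn.le_div_mul_of_map_zero hk0 hgmax hg)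
    (moment_condition_of_ge hc₁ hlt hN₀ hN' hm₁ hm₂)

/-- second family of dual feasibility conditions at large `N`: For
`f_k, f_τ : [0, g_max] → ℝ` strictly convex, strictly increasing, continuous,
vanishing at `0`, with `f_τ ≤ f_k` pointwise, `f_τ(g_max) < f_k(g_max)`, `f_k`
having finite left derivative `L` at `g_max`, and constants `c₁, c₂ > 0`, there is
`N₂` (depending only on `f_k, f_τ, g_max, c₁, c₂`) such that for all `N ≥ N₂` and
every nonnegative random variable `Z` with `E[(1+Z)⁻¹] ≥ c₁/N` and
`E[(1+Z)⁻²] ≤ c₂/N²`, for all `g ∈ [0, g_max]`: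
`E[log(1 + f_k(g_max)/(1+Z))] - E[log(1 + f_τ(g_max)/(1+Z))]
  ≥ E[log(1 + f_k(g)/(1+Z))] - (g/g_max) E[log(1 + f_τ(g_max)/(1+Z))]`. -/
theorem dual_feasibility_above_threshold
    (gmax : ℝ) (hgmax : 0 < gmax) (fk fτ : ℝ → ℝ) (L : ℝ)
    (hkconv : StrictConvexOn ℝ (Set.Icc 0 gmax) fk)
    (hτconv : StrictConvexOn ℝ (Set.Icc 0 gmax) fτ)
    (hkmono : StrictMonoOn fk (Set.Icc 0 gmax))
    (hτmono : StrictMonoOn fτ (Set.Icc 0 gmax))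
    (hkcont : ContinuousOn fk (Set.Icc 0 gmax))
    (hτcont : ContinuousOn fτ (Set.Icc 0 gmax))
    (hk0 : fk 0 = 0) (hτ0 : fτ 0 = 0)
    (hle : ∀ g ∈ Set.Icc 0 gmax, fτ g ≤ fk g)
    (hlt : fτ gmax < fk gmax)
    (hL : Filter.Tendsto (fun g => (fk gmax - fk g) / (gmax - g))
      (nhdsWithin gmax (Set.Iio gmax)) (nhds L))
    (c₁ c₂ : ℝ) (hc₁ : 0 < c₁) (hc₂ : 0 < c₂) :
    ∃ N₂ : ℕ, 0 < N₂ ∧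
      ∀ N : ℕ, N₂ ≤ N →
      ∀ (Ω : Type) [MeasurableSpace Ω] (P : Measure Ω) [IsProbabilityMeasure P]
        (Z : Ω → ℝ), Measurable Z → (∀ᵐ ω ∂P, 0 ≤ Z ω) →
        c₁ / (N : ℝ) ≤ ∫ ω, (1 + Z ω)⁻¹ ∂P →
        ∫ ω, ((1 + Z ω) ^ 2)⁻¹ ∂P ≤ c₂ / (N : ℝ) ^ 2 →
        ∀ g ∈ Set.Icc 0 gmax,
          (∫ ω, Real.log (1 + fk g / (1 + Z ω)) ∂P)
              - (g / gmax) * ∫ ω, Real.log (1 + fτ gmax / (1 + Z ω)) ∂P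
            ≤ (∫ ω, Real.log (1 + fk gmax / (1 + Z ω)) ∂P)
              - ∫ ω, Real.log (1 + fτ gmax / (1 + Z ω)) ∂P :=
  dual_feasibility_above_threshold_general gmax hgmax fk fτ hkconv hkmono hτmono hk0 hτ0 hlt c₁ c₂
    hc₁
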